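/- Every right-angled Artin group A(Γ) embeds as a finite index subgroup of a right-angled Coxeter group. Specifically, if all vertices of Γ are labeled ∞ then β : G(Γ) → G(Γ'') is an injective homomorphism from A(Γ) into the right-angled Coxeter group G(Γ''), whose image has index 2^{#V}. -/

import Mathlib

/-!
`G(Γ'')` is the semidirect product `A(Γ) ⋊ (ℤ/2)^V` in which the basis vector `e_s` acts on
`A(Γ)` by inverting the generator `s` and fixing the others. Mutually inverse
isomorphisms are given by `(s,0) ↦ e_s`, `(s,1) ↦ s·e_s` and `s ↦ β(s) = (s,1)·(s,0)`,
`e_s ↦ (s,0)`; the defining relations hold because `(s,0)` conjugates `β(s)` to its inverse and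
commutes with every `β(t)`, `t ≠ s`. Under this isomorphism `β` becomes the inclusion of the
normal factor `A(Γ)`, so it is injective with image of index `#(ℤ/2)^V = 2^{#V}`.
-/

open Pointwise

/-- Relations of the graph product of cyclic groups: `s ^ n = 1` whenever the label of
`s` is the finite value `n`, and commutators of generators joined by an edge. -/
def graphProductRels {V : Type*} (Γ : SimpleGraph V) (c : V → ℕ∞) : Set (FreeGroup V) :=
  {r | (∃ (s : V) (n : ℕ), c s = (n : ℕ∞) ∧ r = FreeGroup.of s ^ n) ∨
       (∃ s t : V, Γ.Adj s t ∧
         r = FreeGroup.of s * FreeGroup.of t * (FreeGroup.of s)⁻¹ * (FreeGroup.of t)⁻¹)}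

/-- The graph product of cyclic groups associated to a graph `Γ` with labeling `c`. -/
abbrev GraphProduct {V : Type*} (Γ : SimpleGraph V) (c : V → ℕ∞) : Type _ :=
  PresentedGroup (graphProductRels Γ c)

/-- The generator of `GraphProduct Γ c` corresponding to a vertex `s`. -/
def gpGen {V : Type*} (Γ : SimpleGraph V) (c : V → ℕ∞) (s : V) : GraphProduct Γ c :=
  PresentedGroup.of s

/-- The element of the graph product represented by a word `(s₁^{e₁}, …, s_k^{e_k})`. -/
def wordProd {V : Type*} (Γ : SimpleGraph V) (c : V → ℕ∞) (w : List (V × ℤ)) :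
    GraphProduct Γ c :=
  (w.map (fun p => gpGen Γ c p.1 ^ p.2)).prod

/-- The elementary moves on words: deleting a letter that is trivial in the vertex group,
merging consecutive powers of the same generator, and swapping consecutive letters whose
generators are joined by an edge. -/
inductive GPMove {V : Type*} (Γ : SimpleGraph V) (c : V → ℕ∞) :
    List (V × ℤ) → List (V × ℤ) → Prop
  | del (w₁ w₂ : List (V × ℤ)) (s : V) (e : ℤ) (h : gpGen Γ c s ^ e = 1) :
      GPMove Γ c (w₁ ++ (s, e) :: w₂) (w₁ ++ w₂)
  | merge (w₁ w₂ : List (V × ℤ)) (s : V) (a b : ℤ) :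
      GPMove Γ c (w₁ ++ (s, a) :: (s, b) :: w₂) (w₁ ++ (s, a + b) :: w₂)
  | swap (w₁ w₂ : List (V × ℤ)) (s t : V) (a b : ℤ) (h : Γ.Adj s t) :
      GPMove Γ c (w₁ ++ (s, a) :: (t, b) :: w₂) (w₁ ++ (t, b) :: (s, a) :: w₂)

/-- A word is reduced if it cannot be shortened by any sequence of elementary moves. -/
def GPReduced {V : Type*} (Γ : SimpleGraph V) (c : V → ℕ∞) (w : List (V × ℤ)) : Prop :=
  ∀ w', Relation.ReflTransGen (GPMove Γ c) w w' → w.length ≤ w'.length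

/-- The length of a word: infinite-order letters count with the absolute value of their
exponent, finite-order letters count once. -/
def wordLen {V : Type*} (c : V → ℕ∞) (w : List (V × ℤ)) : ℕ :=
  (w.map (fun p => if c p.1 = ⊤ then p.2.natAbs else 1)).sum

/-- The length of a group element: the minimum of the lengths of words representing it. -/
noncomputable def elLen {V : Type*} (Γ : SimpleGraph V) (c : V → ℕ∞)
    (g : GraphProduct Γ c) : ℕ :=
  sInf {n | ∃ w, wordProd Γ c w = g ∧ wordLen c w = n}

/-- `g` ends with the generator `s`. -/
def EndsWith {V : Type*} (Γ : SimpleGraph V) (c : V → ℕ∞) (g : GraphProduct Γ c)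
    (s : V) : Prop :=
  ∃ (w : List (V × ℤ)) (e : ℤ), GPReduced Γ c (w ++ [(s, e)]) ∧
    wordProd Γ c (w ++ [(s, e)]) = g

/-- The vertices of `Γ` with finite label. -/
def Vfin {V : Type*} (c : V → ℕ∞) := {s : V // c s ≠ ⊤}

/-- The vertices of `Γ` with infinite label. -/
def Vinf {V : Type*} (c : V → ℕ∞) := {s : V // c s = ⊤}

/-- Vertex set of the Davis–Januszkiewicz graph `Γ''`: `V_fin ∪ (V_inf × {0,1})`,
where `true` encodes `1` and `false` encodes `0`. -/
def DJVert {V : Type*} (c : V → ℕ∞) := Vfin c ⊕ (Vinf c × Bool)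

/-- The graph `Γ''`: the subgraph on `V_fin ∪ (V_inf × {1})` is a copy of `Γ`, and
each `(v,0)` is joined to every other vertex except `(v,1)`. -/
def DJGraph {V : Type*} (Γ : SimpleGraph V) (c : V → ℕ∞) : SimpleGraph (DJVert c) :=
  SimpleGraph.fromRel (fun x y =>
    match x, y with
    | Sum.inl s, Sum.inl t => Γ.Adj s.1 t.1
    | Sum.inl s, Sum.inr (t, b) => if b then Γ.Adj s.1 t.1 else True
    | Sum.inr (t, b), Sum.inl s => if b then Γ.Adj s.1 t.1 else True
    | Sum.inr (s, a), Sum.inr (t, b) =>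
        if a = true ∧ b = true then Γ.Adj s.1 t.1 else s.1 ≠ t.1)

/-- Labels of `Γ''`: vertices of `V_fin` keep their label, the new vertices are
labeled `2`. -/
def DJLabel {V : Type*} (c : V → ℕ∞) : DJVert c → ℕ∞
  | Sum.inl s => c s.1
  | Sum.inr _ => 2

/-- The graph product `G(Γ'')`. -/
abbrev GPdj {V : Type*} (Γ : SimpleGraph V) (c : V → ℕ∞) : Type _ :=
  GraphProduct (DJGraph Γ c) (DJLabel c)

/-- The generator of `G(Γ'')` corresponding to `s ∈ V_fin`. -/
def genFin {V : Type*} (Γ : SimpleGraph V) (c : V → ℕ∞) (s : Vfin c) : GPdj Γ c :=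
  gpGen (DJGraph Γ c) (DJLabel c) (Sum.inl s)

/-- The generator of `G(Γ'')` corresponding to `(s,1)`, `s ∈ V_inf`. -/
def genA {V : Type*} (Γ : SimpleGraph V) (c : V → ℕ∞) (s : Vinf c) : GPdj Γ c :=
  gpGen (DJGraph Γ c) (DJLabel c) (Sum.inr (s, true))

/-- The generator of `G(Γ'')` corresponding to `(s,0)`, `s ∈ V_inf`. -/
def genR {V : Type*} (Γ : SimpleGraph V) (c : V → ℕ∞) (s : Vinf c) : GPdj Γ c :=
  gpGen (DJGraph Γ c) (DJLabel c) (Sum.inr (s, false))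

/-- `φ` is the homomorphism `β`, determined by `β(s) = s` for `s ∈ V_fin` and
`β(s) = (s,1)·(s,0)` for `s ∈ V_inf`. -/
def BetaSpec {V : Type*} (Γ : SimpleGraph V) (c : V → ℕ∞)
    (φ : GraphProduct Γ c →* GPdj Γ c) : Prop :=
  (∀ (s : V) (h : c s ≠ ⊤), φ (gpGen Γ c s) = genFin Γ c ⟨s, h⟩) ∧
  (∀ (s : V) (h : c s = ⊤), φ (gpGen Γ c s) = genA Γ c ⟨s, h⟩ * genR Γ c ⟨s, h⟩)

/-- The subgroup `E` of `G(Γ'')` generated by the elements `(s,0)`, `s ∈ V_inf`. -/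
def Esub {V : Type*} (Γ : SimpleGraph V) (c : V → ℕ∞) : Subgroup (GPdj Γ c) :=
  Subgroup.closure (Set.range (genR Γ c))


namespace GraphProduct

variable {V : Type*} {Γ : SimpleGraph V} {c : V → ℕ∞} {G : Type*} [Group G]

theorem gpGen_pow_eq_one {s : V} {n : ℕ} (h : c s = n) : gpGen Γ c s ^ n = 1 :=
  (QuotientGroup.eq_one_iff _).mpr (Subgroup.subset_normalClosure (Or.inl ⟨s, n, h, rfl⟩))

theorem gpGen_commute {s t : V} (h : Γ.Adj s t) : Commute (gpGen Γ c s) (gpGen Γ c t) :=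
  commutatorElement_eq_one_iff_commute.mp <|
    (QuotientGroup.eq_one_iff _).mpr (Subgroup.subset_normalClosure (Or.inr ⟨s, t, h, rfl⟩))

def lift (f : V → G) (hpow : ∀ s (n : ℕ), c s = n → f s ^ n = 1)
    (hcomm : ∀ s t, Γ.Adj s t → Commute (f s) (f t)) : GraphProduct Γ c →* G :=
  PresentedGroup.toGroup (f := f) <| by
    rintro r (⟨s, n, hs, rfl⟩ | ⟨s, t, hst, rfl⟩)
    · simpa using hpow s n hs
    · simpa [← commutatorElement_def, commutatorElement_eq_one_iff_commute] using hcomm s t hst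

@[simp]
theorem lift_gpGen (f : V → G) (hpow : ∀ s (n : ℕ), c s = n → f s ^ n = 1)
    (hcomm : ∀ s t, Γ.Adj s t → Commute (f s) (f t)) (s : V) :
    lift f hpow hcomm (gpGen Γ c s) = f s :=
  PresentedGroup.toGroup.of _

theorem hom_ext {f g : GraphProduct Γ c →* G} (h : ∀ s, f (gpGen Γ c s) = g (gpGen Γ c s)) :
    f = g :=
  PresentedGroup.ext h

theorem pow_eq_one_of_top (f : V → G) :
    ∀ s (n : ℕ), (fun _ : V => (⊤ : ℕ∞)) s = n → f s ^ n = 1 :=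
  fun _ n h => (ENat.top_ne_natCast n h).elim

end GraphProduct

section DJGraph

open GraphProduct

variable {V : Type*} {Γ : SimpleGraph V} {c : V → ℕ∞}

theorem djGraph_adj_inr_inr {s t : Vinf c} {a b : Bool} :
    (DJGraph Γ c).Adj (.inr (s, a)) (.inr (t, b)) ↔
      if a = true ∧ b = true then Γ.Adj s.1 t.1 else s.1 ≠ t.1 := by
  have hne : ∀ a b, s.1 ≠ t.1 → (Sum.inr (s, a) : DJVert c) ≠ .inr (t, b) :=
    fun _ _ hst e => hst (congrArg (fun p => p.1.1) (Sum.inr_injective e))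
  refine (SimpleGraph.fromRel_adj _ _ _).trans ?_
  cases a <;> cases b <;>
    simp only [Bool.false_eq_true, and_false, false_and, and_self, if_false, if_true,
      ne_comm (a := t.1), Γ.adj_comm t.1, or_self]
  exacts [and_iff_right_of_imp (hne _ _), and_iff_right_of_imp (hne _ _),
    and_iff_right_of_imp (hne _ _), and_iff_right_of_imp fun h => hne _ _ h.ne]

theorem gpGen_inr_sq (p : Vinf c × Bool) :
    gpGen (DJGraph Γ c) (DJLabel c) (.inr p) ^ 2 = 1 :=
  gpGen_pow_eq_one rfl

theorem genA_mul_self (s : Vinf c) : genA Γ c s * genA Γ c s = 1 :=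
  (sq _).symm.trans (gpGen_inr_sq _)

theorem genR_mul_self (s : Vinf c) : genR Γ c s * genR Γ c s = 1 :=
  (sq _).symm.trans (gpGen_inr_sq _)

theorem genA_inv (s : Vinf c) : (genA Γ c s)⁻¹ = genA Γ c s :=
  inv_eq_of_mul_eq_one_right (genA_mul_self s)

theorem genR_inv (s : Vinf c) : (genR Γ c s)⁻¹ = genR Γ c s :=
  inv_eq_of_mul_eq_one_right (genR_mul_self s)

theorem commute_genA_genA {s t : Vinf c} (h : Γ.Adj s.1 t.1) :
    Commute (genA Γ c s) (genA Γ c t) :=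
  gpGen_commute (djGraph_adj_inr_inr.mpr (by simpa using h))

theorem commute_genR_genA {s t : Vinf c} (h : s.1 ≠ t.1) :
    Commute (genR Γ c s) (genA Γ c t) :=
  gpGen_commute (djGraph_adj_inr_inr.mpr (by simpa using h))

theorem commute_genR_genR {s t : Vinf c} (h : s.1 ≠ t.1) :
    Commute (genR Γ c s) (genR Γ c t) :=
  gpGen_commute (djGraph_adj_inr_inr.mpr (by simpa using h))

end DJGraph

namespace SemidirectProduct

variable {N G : Type*} [Group N] [Group G] {φ : G →* MulAut N}

theorem commute_inr_inl {g : G} {n : N} (h : φ g n = n) :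
    Commute (inr g : N ⋊[φ] G) (inl n) := by
  ext <;> simp [h]

theorem inl_mul_inr_sq {g : G} {n : N} (hn : φ g n = n⁻¹) (hg : g * g = 1) :
    (inl n * inr g : N ⋊[φ] G) ^ 2 = 1 := by
  ext <;> simp [sq, hn, hg]

theorem index_range_inl : (inl : N →* N ⋊[φ] G).range.index = Nat.card G := by
  rw [range_inl_eq_ker_rightHom, Subgroup.index_ker, MonoidHom.range_eq_top_of_surjective _
    rightHom_surjective, Subgroup.card_top]

end SemidirectProduct

section UnitsInt

variable {G : Type*} [Group G]

def unitsIntLift (g : G) (hg : g * g = 1) : ℤˣ →* G where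
  toFun u := if u = 1 then 1 else g
  map_one' := if_pos rfl
  map_mul' u v := by
    rcases Int.units_eq_one_or u with rfl | rfl <;>
      rcases Int.units_eq_one_or v with rfl | rfl <;> simp [hg]

@[simp]
theorem unitsIntLift_neg_one (g : G) (hg : g * g = 1) : unitsIntLift g hg (-1) = g := by
  simp [unitsIntLift]

theorem Commute.unitsIntLift {g h : G} (hc : Commute g h) (hg : g * g = 1) (hh : h * h = 1)
    (u v : ℤˣ) : Commute (unitsIntLift g hg u) (unitsIntLift h hh v) := by
  simp only [_root_.unitsIntLift, MonoidHom.coe_mk, OneHom.coe_mk]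
  split_ifs <;> simp [hc]

end UnitsInt

section RAAG

open GraphProduct
open SemidirectProduct (inl inr)

variable {V : Type*} (Γ : SimpleGraph V)

def Vinf.ofTop (s : V) : Vinf fun _ : V => (⊤ : ℕ∞) := ⟨s, rfl⟩

@[simp]
theorem Vinf.ofTop_val (s : Vinf fun _ : V => (⊤ : ℕ∞)) : Vinf.ofTop s.1 = s := rfl

theorem unitsInt_pi_mul_self (w : V → ℤˣ) : w * w = 1 :=
  funext fun s => Int.units_mul_self (w s)

def signEnd (w : V → ℤˣ) :
    (GraphProduct Γ fun _ => (⊤ : ℕ∞)) →* GraphProduct Γ fun _ => (⊤ : ℕ∞) :=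
  lift (fun t => gpGen Γ _ t ^ (w t : ℤ)) (pow_eq_one_of_top _)
    fun _ _ h => (gpGen_commute h).zpow_zpow _ _

@[simp]
theorem signEnd_gpGen (w : V → ℤˣ) (t : V) :
    signEnd Γ w (gpGen Γ _ t) = gpGen Γ _ t ^ (w t : ℤ) :=
  lift_gpGen ..

theorem signEnd_one : signEnd Γ 1 = MonoidHom.id _ :=
  hom_ext fun t => by simp

theorem signEnd_mul (w w' : V → ℤˣ) :
    signEnd Γ (w * w') = (signEnd Γ w).comp (signEnd Γ w') :=
  hom_ext fun t => by simp [zpow_mul]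

theorem signEnd_comp_self (w : V → ℤˣ) :
    (signEnd Γ w).comp (signEnd Γ w) = MonoidHom.id _ := by
  rw [← signEnd_mul, unitsInt_pi_mul_self, signEnd_one]

def signAut : (V → ℤˣ) →* MulAut (GraphProduct Γ fun _ => (⊤ : ℕ∞)) where
  toFun w :=
    (signEnd Γ w).toMulEquiv (signEnd Γ w) (signEnd_comp_self Γ w) (signEnd_comp_self Γ w)
  map_one' := MulEquiv.ext fun x => DFunLike.congr_fun (signEnd_one Γ) x
  map_mul' w w' := MulEquiv.ext fun x => DFunLike.congr_fun (signEnd_mul Γ w w') x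

@[simp]
theorem signAut_gpGen (w : V → ℤˣ) (t : V) :
    signAut Γ w (gpGen Γ _ t) = gpGen Γ _ t ^ (w t : ℤ) :=
  signEnd_gpGen ..

/-- `V → ℤˣ` plays the role of `(ℤ/2)^V`; `w` inverts the generators `t` with `w t = -1`. -/
abbrev SignSemidirect := (GraphProduct Γ fun _ => (⊤ : ℕ∞)) ⋊[signAut Γ] (V → ℤˣ)

variable {Γ} in
theorem signAut_mulSingle_self [DecidableEq V] (s : V) :
    signAut Γ (Pi.mulSingle s (-1)) (gpGen Γ _ s) = (gpGen Γ _ s)⁻¹ := by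
  simp

variable {Γ} in
theorem signAut_mulSingle_of_ne [DecidableEq V] {s t : V} (h : t ≠ s) :
    signAut Γ (Pi.mulSingle s (-1)) (gpGen Γ _ t) = gpGen Γ _ t := by
  simp [h]

/-- The homomorphism `β`. -/
def djBeta : (GraphProduct Γ fun _ => (⊤ : ℕ∞)) →* GPdj Γ fun _ => (⊤ : ℕ∞) :=
  lift (fun s => genA Γ _ (.ofTop s) * genR Γ _ (.ofTop s)) (pow_eq_one_of_top _) fun _ _ h =>
    ((commute_genA_genA h).mul_right (commute_genR_genA h.ne.symm).symm).mul_left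
      ((commute_genR_genA h.ne).mul_right (commute_genR_genR h.ne))

@[simp]
theorem djBeta_gpGen (s : V) :
    djBeta Γ (gpGen Γ _ s) = genA Γ _ (.ofTop s) * genR Γ _ (.ofTop s) :=
  lift_gpGen ..

def djReflections [Fintype V] [DecidableEq V] :
    (V → ℤˣ) →* GPdj Γ fun _ => (⊤ : ℕ∞) :=
  MonoidHom.noncommPiCoprod (fun s => unitsIntLift (genR Γ _ (.ofTop s)) (genR_mul_self _))
    fun _ _ h => (commute_genR_genR h).unitsIntLift _ _

@[simp]
theorem djReflections_mulSingle [Fintype V] [DecidableEq V] (s : V) :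
    djReflections Γ (Pi.mulSingle s (-1)) = genR Γ _ (.ofTop s) :=
  (MonoidHom.noncommPiCoprod_mulSingle _ _ _).trans (unitsIntLift_neg_one _ _)

theorem djReflections_conj_djBeta [Fintype V] [DecidableEq V] (w : V → ℤˣ) (t : V) :
    MulAut.conj (djReflections Γ w) (djBeta Γ (gpGen Γ _ t)) =
      djBeta Γ (gpGen Γ _ t) ^ (w t : ℤ) := by
  induction w using Pi.mulSingle_induction with
  | one => simp
  | mul w w' hw hw' =>
    rw [map_mul, map_mul, MulAut.mul_apply, hw', map_zpow, hw, ← zpow_mul, Pi.mul_apply,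
      Units.val_mul, mul_comm]
  | mulSingle s u =>
    obtain rfl | rfl := Int.units_eq_one_or u
    · simp
    by_cases h : t = s
    · subst h
      simp [genA_inv, genR_inv, mul_assoc, genR_mul_self]
    · simp only [djReflections_mulSingle, MulAut.conj_apply, djBeta_gpGen,
        Pi.mulSingle_eq_of_ne h, Units.val_one, zpow_one]
      rw [((commute_genR_genA (Ne.symm h)).mul_right (commute_genR_genR (Ne.symm h))).eq,
        mul_inv_cancel_right]

theorem djBeta_comp_signAut [Fintype V] [DecidableEq V] (w : V → ℤˣ) :
    (djBeta Γ).comp (signAut Γ w).toMonoidHom =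
      (MulAut.conj (djReflections Γ w)).toMonoidHom.comp (djBeta Γ) :=
  hom_ext fun t => by
    simp only [MonoidHom.comp_apply, MulEquiv.coe_toMonoidHom, djReflections_conj_djBeta,
      signAut_gpGen, map_zpow]

def semidirectToRACG [Fintype V] [DecidableEq V] :
    SignSemidirect Γ →* GPdj Γ fun _ => (⊤ : ℕ∞) :=
  SemidirectProduct.lift (djBeta Γ) (djReflections Γ) (djBeta_comp_signAut Γ)

variable [DecidableEq V]

def racgToSemidirectGen : DJVert (fun _ : V => (⊤ : ℕ∞)) → SignSemidirect Γ
  | .inl s => (s.2 rfl).elim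
  | .inr (s, true) => inl (gpGen Γ _ s.1) * inr (Pi.mulSingle s.1 (-1))
  | .inr (s, false) => inr (Pi.mulSingle s.1 (-1))

theorem racgToSemidirectGen_inr_sq (p : Vinf (fun _ : V => (⊤ : ℕ∞)) × Bool) :
    racgToSemidirectGen Γ (.inr p) ^ 2 = 1 := by
  obtain ⟨s, _ | _⟩ := p
  · rw [racgToSemidirectGen, sq, ← map_mul, unitsInt_pi_mul_self, map_one]
  · exact SemidirectProduct.inl_mul_inr_sq (signAut_mulSingle_self s.1) (unitsInt_pi_mul_self _)

theorem racgToSemidirectGen_commute {u v : DJVert fun _ : V => (⊤ : ℕ∞)}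
    (h : (DJGraph Γ _).Adj u v) :
    Commute (racgToSemidirectGen Γ u) (racgToSemidirectGen Γ v) := by
  obtain s | ⟨s, a⟩ := u
  · exact (s.2 rfl).elim
  obtain t | ⟨t, b⟩ := v
  · exact (t.2 rfl).elim
  have hR : Commute (inr (Pi.mulSingle s.1 (-1)) : SignSemidirect Γ)
      (inr (Pi.mulSingle t.1 (-1))) :=
    (Commute.all _ _).map inr
  rw [djGraph_adj_inr_inr] at h
  cases a <;> cases b <;>
    simp only [Bool.false_eq_true, and_false, false_and, and_self, if_false, if_true] at h
  · exact hR
  · exact (SemidirectProduct.commute_inr_inl (signAut_mulSingle_of_ne h.symm)).mul_right hR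
  · exact ((SemidirectProduct.commute_inr_inl (signAut_mulSingle_of_ne h)).mul_right hR.symm).symm
  · exact (((gpGen_commute h).map inl).mul_right
      (SemidirectProduct.commute_inr_inl (signAut_mulSingle_of_ne h.ne)).symm).mul_left
      ((SemidirectProduct.commute_inr_inl (signAut_mulSingle_of_ne h.ne.symm)).mul_right hR)

def racgToSemidirect : (GPdj Γ fun _ => (⊤ : ℕ∞)) →* SignSemidirect Γ :=
  lift (racgToSemidirectGen Γ)
    (by
      rintro (s | p) n hn
      · exact (s.2 rfl).elim
      change (2 : ℕ∞) = n at hn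
      obtain rfl : n = 2 := by exact_mod_cast hn.symm
      exact racgToSemidirectGen_inr_sq Γ p)
    fun _ _ => racgToSemidirectGen_commute Γ

theorem racgToSemidirect_genA (s : Vinf fun _ : V => (⊤ : ℕ∞)) :
    racgToSemidirect Γ (genA Γ _ s) = inl (gpGen Γ _ s.1) * inr (Pi.mulSingle s.1 (-1)) :=
  lift_gpGen ..

theorem racgToSemidirect_genR (s : Vinf fun _ : V => (⊤ : ℕ∞)) :
    racgToSemidirect Γ (genR Γ _ s) = inr (Pi.mulSingle s.1 (-1)) :=
  lift_gpGen ..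

theorem racgToSemidirect_comp_djBeta : (racgToSemidirect Γ).comp (djBeta Γ) = inl :=
  hom_ext fun t => by
    rw [MonoidHom.comp_apply, djBeta_gpGen, map_mul, racgToSemidirect_genA,
      racgToSemidirect_genR, mul_assoc, ← map_mul, unitsInt_pi_mul_self, map_one, mul_one]
    rfl

variable [Fintype V]

theorem semidirectToRACG_comp_racgToSemidirect :
    (semidirectToRACG Γ).comp (racgToSemidirect Γ) = MonoidHom.id _ := by
  refine hom_ext ?_
  rintro (s | ⟨s, _ | _⟩)
  · exact (s.2 rfl).elim
  · change semidirectToRACG Γ (racgToSemidirect Γ (genR Γ _ s)) = genR Γ _ s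
    rw [racgToSemidirect_genR, semidirectToRACG, SemidirectProduct.lift_inr,
      djReflections_mulSingle]
    rfl
  · change semidirectToRACG Γ (racgToSemidirect Γ (genA Γ _ s)) = genA Γ _ s
    rw [racgToSemidirect_genA, semidirectToRACG, map_mul, SemidirectProduct.lift_inl,
      SemidirectProduct.lift_inr, djReflections_mulSingle]
    change djBeta Γ (gpGen Γ _ s.1) * genR Γ _ s = genA Γ _ s
    rw [djBeta_gpGen, Vinf.ofTop_val, mul_assoc, genR_mul_self, mul_one]

theorem racgToSemidirect_comp_semidirectToRACG :
    (racgToSemidirect Γ).comp (semidirectToRACG Γ) = MonoidHom.id _ := by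
  refine SemidirectProduct.hom_ext ?_ ?_
  · rw [MonoidHom.comp_assoc, semidirectToRACG, SemidirectProduct.lift_comp_inl,
      racgToSemidirect_comp_djBeta, MonoidHom.id_comp]
  · refine MonoidHom.pi_ext fun s u => ?_
    obtain rfl | rfl := Int.units_eq_one_or u
    · simp
    · simp only [semidirectToRACG, MonoidHom.coe_comp, Function.comp_apply,
        SemidirectProduct.lift_inr, djReflections_mulSingle, MonoidHom.id_apply]
      exact racgToSemidirect_genR Γ _

def racgEquivSemidirect : (GPdj Γ fun _ => (⊤ : ℕ∞)) ≃* SignSemidirect Γ :=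
  (racgToSemidirect Γ).toMulEquiv (semidirectToRACG Γ)
    (semidirectToRACG_comp_racgToSemidirect Γ) (racgToSemidirect_comp_semidirectToRACG Γ)

theorem map_range_djBeta :
    (djBeta Γ).range.map (racgEquivSemidirect Γ : _ →* SignSemidirect Γ) =
      SemidirectProduct.inl.range := by
  rw [← MonoidHom.range_comp]
  exact congrArg MonoidHom.range (racgToSemidirect_comp_djBeta Γ)

end RAAG

theorem djBeta_injective {V : Type*} (Γ : SimpleGraph V) : Function.Injective (djBeta Γ) := by
  classical
  refine Function.Injective.of_comp (f := racgToSemidirect Γ) ?_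
  rw [← MonoidHom.coe_comp, racgToSemidirect_comp_djBeta]
  exact SemidirectProduct.inl_injective

theorem index_range_djBeta {V : Type*} [Finite V] (Γ : SimpleGraph V) :
    (djBeta Γ).range.index = 2 ^ Nat.card V := by
  classical
  have := Fintype.ofFinite V
  rw [← Subgroup.index_map_equiv _ (racgEquivSemidirect Γ), map_range_djBeta,
    SemidirectProduct.index_range_inl, Nat.card_fun, Nat.card_eq_fintype_card,
    Fintype.card_units_int]

theorem raag_embeds_in_racg_general {V : Type*} [Fintype V]
    (Γ : SimpleGraph V) :
    ∃ φ : GraphProduct Γ (fun _ => (⊤ : ℕ∞)) →* GPdj Γ (fun _ => (⊤ : ℕ∞)),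
      BetaSpec Γ (fun _ => (⊤ : ℕ∞)) φ ∧ Function.Injective φ ∧
      (∀ w : DJVert (fun _ : V => (⊤ : ℕ∞)),
        gpGen (DJGraph Γ _) (DJLabel _) w ^ 2 = 1) ∧
      φ.range.index = 2 ^ Nat.card V := by
  refine ⟨djBeta Γ, ⟨fun _ h => (h rfl).elim, fun s _ => djBeta_gpGen Γ s⟩, djBeta_injective Γ,
    ?_, index_range_djBeta Γ⟩
  rintro (s | p)
  · exact (s.2 rfl).elim
  · exact gpGen_inr_sq p

/-- every right-angled Artin group embeds with finite index into a
right-angled Coxeter group: if all labels are `∞`, then `β` embeds `A(Γ) = G(Γ)`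
into `G(Γ'')`, all of whose generators are involutions, with image of index
`2^{#V}`. -/
theorem raag_embeds_in_racg {V : Type*} [Fintype V] [DecidableEq V]
    (Γ : SimpleGraph V) :
    ∃ φ : GraphProduct Γ (fun _ => (⊤ : ℕ∞)) →* GPdj Γ (fun _ => (⊤ : ℕ∞)),
      BetaSpec Γ (fun _ => (⊤ : ℕ∞)) φ ∧ Function.Injective φ ∧
      (∀ w : DJVert (fun _ : V => (⊤ : ℕ∞)),
        gpGen (DJGraph Γ _) (DJLabel _) w ^ 2 = 1) ∧
      φ.range.index = 2 ^ Nat.card V :=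
  raag_embeds_in_racg_general Γ
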